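/- arXiv:1505.02636 — 2 statements merged into one kernel-verified Lean document; each statement's English description precedes it below -/
import Mathlib

section
/- Let d ∈ N and let w : Z^d → (0,∞) be a weight with ∑_{k∈Z^d} w(k)^{-2} < ∞. Then F_d(w) embeds into the Wiener algebra A(T^d), and for every n ∈ N the approximation numbers of the embedding I_d : F_d(w) → A(T^d) satisfy a_n(I_d) ≤ (∑_{j=n}^∞ σ_j²)^{1/2}. -/
open MeasureTheory Filter
open scoped ENNReal NNReal

noncomputable section

/-- The index lattice `ℤ^d`. -/
abbrev ZLat (d : ℕ) := Fin d → ℤ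

instance fact_two_pi_pos : Fact (0 < 2 * Real.pi) := ⟨by positivity⟩

/-- The `d`-dimensional torus `𝕋^d = [0,2π]^d` with endpoints identified. -/
abbrev Torus (d : ℕ) := Fin d → AddCircle (2 * Real.pi)

/-- The normalized Lebesgue measure `(2π)^{-d} dx` on the `d`-torus. -/
def torusMeasure (d : ℕ) : Measure (Torus d) :=
  ((ENNReal.ofReal (2 * Real.pi))⁻¹) ^ d • Measure.pi fun _ => volume

/-- The character `e^{i k·x}` on the `d`-torus. -/
def torusChar {d : ℕ} (k : ZLat d) (x : Torus d) : ℂ :=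
  ∏ j, fourier (k j) (x j)

/-- The `k`-th Fourier coefficient `f̂(k) = (2π)^{-d} ∫_{𝕋^d} f(x) e^{-i k·x} dx`. -/
def fourierCoef {d : ℕ} (f : Torus d → ℂ) (k : ZLat d) : ℂ :=
  ∫ x, (starRingEnd ℂ) (torusChar k x) * f x ∂(torusMeasure d)

/-- The `n`-th approximation number of a bounded linear operator `T`:
`a_n(T) = inf {‖T - A‖ : rank A < n}`. -/
def approxNum {X Y : Type*} [NormedAddCommGroup X] [NormedSpace ℂ X]
    [NormedAddCommGroup Y] [NormedSpace ℂ Y] (T : X →L[ℂ] Y) (n : ℕ) : ℝ :=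
  sInf {c : ℝ | ∃ A : X →L[ℂ] Y,
    Module.rank ℂ (LinearMap.range (A : X →ₗ[ℂ] Y)) < n ∧ c = ‖T - A‖}

/-- `ℓ²(ℤ^d)`; an isometric model of the Hilbert space `F_d(w)` via `f ↦ (w(k)·f̂(k))_k`.
Under this identification the embedding `I_d : F_d(w) → G` is characterized by the
property that the function `T c` has Fourier coefficients `c(k)/w(k)`. -/
abbrev ellTwo (d : ℕ) := lp (fun _ : ZLat d => ℂ) 2

/-- `ℓ¹(ℤ^d)`; an isometric model of the Wiener algebra `A(𝕋^d)` via `f ↦ (f̂(k))_k`. -/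
abbrev ellOne (d : ℕ) := lp (fun _ : ZLat d => ℂ) 1

/-- `ℓ^∞(ℤ^d)`; an isometric model of the space `ℬ(𝕋^d)` of distributions with bounded
Fourier coefficients. -/
abbrev ellInfty (d : ℕ) := lp (fun _ : ZLat d => ℂ) ⊤

/-- Cauchy–Schwarz for tsums of nonnegative reals. -/
lemma tsum_cs {ι : Type*} {a b : ι → ℝ} (ha0 : ∀ i, 0 ≤ a i) (hb0 : ∀ i, 0 ≤ b i)
    (ha : Summable fun i => a i ^ 2) (hb : Summable fun i => b i ^ 2) :
    Summable (fun i => a i * b i) ∧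
      ∑' i, a i * b i ≤ Real.sqrt (∑' i, a i ^ 2) * Real.sqrt (∑' i, b i ^ 2) := by
  have key : ∀ s : Finset ι, ∑ i ∈ s, a i * b i ≤
      Real.sqrt (∑' i, a i ^ 2) * Real.sqrt (∑' i, b i ^ 2) := by
    intro s
    refine (Real.sum_mul_le_sqrt_mul_sqrt s a b).trans ?_
    have h1 : ∑ i ∈ s, a i ^ 2 ≤ ∑' i, a i ^ 2 :=
      Summable.sum_le_tsum s (fun i _ => sq_nonneg _) ha
    have h2 : ∑ i ∈ s, b i ^ 2 ≤ ∑' i, b i ^ 2 :=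
      Summable.sum_le_tsum s (fun i _ => sq_nonneg _) hb
    exact mul_le_mul (Real.sqrt_le_sqrt h1) (Real.sqrt_le_sqrt h2)
      (Real.sqrt_nonneg _) (Real.sqrt_nonneg _)
  have hs : Summable fun i => a i * b i :=
    summable_of_sum_le (fun i => mul_nonneg (ha0 i) (hb0 i)) key
  exact ⟨hs, Summable.tsum_le_of_sum_le hs key⟩

/-- Members of `ℓ²` have square-summable coordinate norms. -/
lemma ellTwo_summable_sq {d : ℕ} (c : ellTwo d) :
    Summable fun k => ‖c k‖ ^ 2 := by
  have h := (memℓp_gen_iff (by norm_num : 0 < (2 : ℝ≥0∞).toReal)).1 (lp.memℓp c)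
  have : (2 : ℝ≥0∞).toReal = (2 : ℕ) := by norm_num
  simpa [this, Real.rpow_natCast] using h

lemma diag_memℓp {d : ℕ} (v : ZLat d → ℝ) (hv : Summable fun k => v k ^ 2)
    (c : ellTwo d) : Memℓp (fun k => (v k : ℂ) * c k) 1 := by
  apply memℓp_gen
  have hs : Summable fun k => |v k| * ‖c k‖ :=
    (tsum_cs (fun k => abs_nonneg _) (fun k => norm_nonneg _)
      (by simpa [sq_abs] using hv) (ellTwo_summable_sq c)).1
  have : (1 : ℝ≥0∞).toReal = 1 := by norm_num
  simp only [this, Real.rpow_one]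
  convert hs using 2 with k
  simp [norm_mul, Complex.norm_real, Real.norm_eq_abs]

lemma diag_norm_le {d : ℕ} (v : ZLat d → ℝ) (hv0 : ∀ k, 0 ≤ v k)
    (hv : Summable fun k => v k ^ 2) (c : ellTwo d) (f : ellOne d)
    (hf : ∀ k, f k = (v k : ℂ) * c k) :
    ‖f‖ ≤ Real.sqrt (∑' k, v k ^ 2) * ‖c‖ := by
  obtain ⟨hs, hle⟩ := tsum_cs (a := v) (b := fun k => ‖c k‖) hv0
    (fun k => norm_nonneg _) hv (ellTwo_summable_sq c)
  have hnf : ‖f‖ = ∑' k, ‖f k‖ := by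
    have := lp.norm_eq_tsum_rpow (p := 1) (by norm_num) f
    simpa using this
  have hfk : ∀ k, ‖f k‖ = v k * ‖c k‖ := by
    intro k
    rw [hf k]
    simp [norm_mul, Complex.norm_real, Real.norm_eq_abs, abs_of_nonneg (hv0 k)]
  have hcnorm : Real.sqrt (∑' k, ‖c k‖ ^ 2) = ‖c‖ := by
    have h2 := lp.norm_rpow_eq_tsum (p := 2) (by norm_num) c
    have h2' : ‖c‖ ^ (2 : ℕ) = ∑' k, ‖c k‖ ^ (2 : ℕ) := by
      have e2 : (2 : ℝ≥0∞).toReal = (2 : ℕ) := by norm_num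
      rw [e2] at h2
      simpa [Real.rpow_natCast] using h2
    rw [← h2', Real.sqrt_sq (norm_nonneg _)]
  calc ‖f‖ = ∑' k, v k * ‖c k‖ := by rw [hnf]; exact tsum_congr hfk
    _ ≤ Real.sqrt (∑' k, v k ^ 2) * Real.sqrt (∑' k, ‖c k‖ ^ 2) := hle
    _ = Real.sqrt (∑' k, v k ^ 2) * ‖c‖ := by rw [hcnorm]

/-- The diagonal operator `ℓ² → ℓ¹` given by multiplication with `v`. -/
def diagCLM {d : ℕ} (v : ZLat d → ℝ) (hv0 : ∀ k, 0 ≤ v k)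
    (hv : Summable fun k => v k ^ 2) : ellTwo d →L[ℂ] ellOne d :=
  LinearMap.mkContinuous
    { toFun := fun c => (⟨fun k => (v k : ℂ) * c k, diag_memℓp v hv c⟩ : ellOne d)
      map_add' := fun c₁ c₂ => lp.ext (by
        funext k
        simp only [lp.coeFn_add, Pi.add_apply]
        ring)
      map_smul' := fun m c => lp.ext (by
        funext k
        simp only [lp.coeFn_smul, Pi.smul_apply, smul_eq_mul, RingHom.id_apply]
        ring) }
    (Real.sqrt (∑' k, v k ^ 2))
    (fun c => diag_norm_le v hv0 hv c _ (fun k => rfl))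

lemma diagCLM_apply {d : ℕ} (v : ZLat d → ℝ) (hv0 : ∀ k, 0 ≤ v k)
    (hv : Summable fun k => v k ^ 2) (c : ellTwo d) (k : ZLat d) :
    diagCLM v hv0 hv c k = (v k : ℂ) * c k := rfl

/-- The standard unit vector in `ℓ¹(ℤ^d)`. -/
def eOne (d : ℕ) (k : ZLat d) : ellOne d := lp.single 1 k (1 : ℂ)

lemma eOne_apply_self {d : ℕ} (k : ZLat d) : eOne d k k = 1 :=
  lp.single_apply_self _ _ _

lemma eOne_apply_ne {d : ℕ} {k j : ZLat d} (h : j ≠ k) : eOne d k j = 0 :=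
  lp.single_apply_ne _ _ _ h

set_option maxHeartbeats 1000000 in
/-- Lemma 2 of Cobos–Kühn–Sickel. If `∑_k w(k)^{-2} < ∞` then `F_d(w)`
embeds into the Wiener algebra `A(𝕋^d)` (modelled isometrically as the operator
`ℓ² → ℓ¹`, `c ↦ (c k / w k)`), and the approximation numbers of the embedding satisfy
`a_n(I_d) ≤ (∑_{j=n}^∞ σ_j²)^{1/2}`, where `σ` (here indexed from `0`) is the
non-increasing rearrangement of `(1/w(k))_k`. -/
theorem statement1 (d : ℕ) (hd : 0 < d) (w : ZLat d → ℝ) (hw : ∀ k, 0 < w k)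
    (hsum : Summable fun k : ZLat d => (w k)⁻¹ ^ 2)
    (σ : ℕ → ℝ) (hσ : Antitone σ) (e : ℕ ≃ ZLat d) (hσe : ∀ j, σ j = (w (e j))⁻¹) :
    ∃ T : ellTwo d →L[ℂ] ellOne d,
      (∀ (c : ellTwo d) (k : ZLat d), T c k = c k / (w k : ℂ)) ∧
      ∀ n : ℕ, approxNum T (n + 1) ≤ Real.sqrt (∑' j : ℕ, σ (n + j) ^ 2) := by
  set v : ZLat d → ℝ := fun k => (w k)⁻¹ with hv_def
  have hv0 : ∀ k, 0 ≤ v k := fun k => inv_nonneg.2 (hw k).le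
  refine ⟨diagCLM v hv0 hsum, ?_, ?_⟩
  · intro c k
    rw [diagCLM_apply]
    rw [div_eq_mul_inv, Complex.ofReal_inv]
    ring
  · intro n
    -- the finite set of "kept" frequencies
    set F : Finset (ZLat d) := (Finset.range n).image e with hF_def
    set vA : ZLat d → ℝ := fun k => if k ∈ F then v k else 0 with hvA_def
    set vR : ZLat d → ℝ := fun k => if k ∈ F then 0 else v k with hvR_def
    have hvA0 : ∀ k, 0 ≤ vA k := by
      intro k; by_cases h : k ∈ F <;> simp [hvA_def, h, hv0 k]
    have hvR0 : ∀ k, 0 ≤ vR k := by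
      intro k; by_cases h : k ∈ F <;> simp [hvR_def, h, hv0 k]
    have hvA_sum : Summable fun k => vA k ^ 2 := by
      refine Summable.of_nonneg_of_le (fun k => sq_nonneg _) (fun k => ?_) hsum
      by_cases h : k ∈ F <;> simp [hvA_def, hv_def, h, sq_nonneg, inv_pow]
    have hvR_sum : Summable fun k => vR k ^ 2 := by
      refine Summable.of_nonneg_of_le (fun k => sq_nonneg _) (fun k => ?_) hsum
      by_cases h : k ∈ F <;> simp [hvR_def, hv_def, h, sq_nonneg, inv_pow]
    set A := diagCLM vA hvA0 hvA_sum with hA_def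
    set T := diagCLM v hv0 hsum with hT_def
    have hmemF : ∀ j : ℕ, e j ∈ F ↔ j < n := by
      intro j
      simp only [hF_def, Finset.mem_image, Finset.mem_range]
      constructor
      · rintro ⟨i, hi, hij⟩
        rwa [← e.injective hij]
      · intro hj; exact ⟨j, hj, rfl⟩
    -- rank bound
    have hrank : Module.rank ℂ (LinearMap.range ((A : ellTwo d →L[ℂ] ellOne d) :
        ellTwo d →ₗ[ℂ] ellOne d)) < ((n + 1 : ℕ) : Cardinal) := by
      have hsub : LinearMap.range ((A : ellTwo d →L[ℂ] ellOne d) :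
          ellTwo d →ₗ[ℂ] ellOne d) ≤
          Submodule.span ℂ (Set.range fun i : Fin n => eOne d (e i)) := by
        rintro y ⟨c, rfl⟩
        have hrepr : (A : ellTwo d →L[ℂ] ellOne d) c =
            ∑ i : Fin n, ((vA (e i) : ℂ) * c (e i)) • eOne d (e i) := by
          apply lp.ext
          funext k
          rw [lp.coeFn_sum]
          simp only [Finset.sum_apply]
          have hterm : ∀ i : Fin n,
              (((vA (e i) : ℂ) * c (e i)) • eOne d (e i)) k =
                (vA (e i) : ℂ) * c (e i) * (eOne d (e i) k) := by
            intro i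
            rw [lp.coeFn_smul, Pi.smul_apply, smul_eq_mul]
          simp only [hterm]
          by_cases hk : k ∈ F
          · obtain ⟨j, hj, hjk⟩ : ∃ j ∈ Finset.range n, e j = k := by
              simpa [hF_def, Finset.mem_image] using hk
            rw [Finset.mem_range] at hj
            set i₀ : Fin n := ⟨j, hj⟩
            rw [Finset.sum_eq_single i₀]
            · have : eOne d (e (i₀ : ℕ)) k = 1 := by
                have hke : k = e (i₀ : ℕ) := hjk.symm
                rw [hke]; exact eOne_apply_self _
              rw [this, mul_one]
              have hke : e (i₀ : ℕ) = k := hjk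
              rw [diagCLM_apply, hke]
            · intro i _ hi
              have hne : k ≠ e (i : ℕ) := by
                intro hke
                apply hi
                have : (i₀ : ℕ) = (i : ℕ) := e.injective (by rw [hjk, hke])
                exact (Fin.ext this).symm
              rw [eOne_apply_ne hne, mul_zero]
            · intro h; exact absurd (Finset.mem_univ i₀) h
          · have hzero : ∀ i : Fin n, (vA (e i) : ℂ) * c (e i) *
                (eOne d (e i) k) = 0 := by
              intro i
              have hne : k ≠ e (i : ℕ) := by
                intro hke
                apply hk
                rw [hke]
                exact (hmemF i).2 i.isLt
              rw [eOne_apply_ne hne, mul_zero]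
            rw [Finset.sum_eq_zero fun i _ => hzero i]
            rw [diagCLM_apply]
            have : vA k = 0 := by simp [hvA_def, hk]
            rw [this]
            simp
        simp only [ContinuousLinearMap.coe_coe]
        rw [hrepr]
        exact Submodule.sum_mem _ fun i _ =>
          Submodule.smul_mem _ _ (Submodule.subset_span (Set.mem_range_self i))
      calc Module.rank ℂ (LinearMap.range ((A : ellTwo d →L[ℂ] ellOne d) :
              ellTwo d →ₗ[ℂ] ellOne d))
          ≤ Module.rank ℂ (Submodule.span ℂ
              (Set.range fun i : Fin n => eOne d (e i))) :=
            Submodule.rank_mono hsub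
        _ ≤ Cardinal.mk (Set.range fun i : Fin n => eOne d (e i)) :=
            rank_span_le (R := ℂ) _
        _ ≤ Cardinal.mk (Fin n) := Cardinal.mk_range_le
        _ = (n : Cardinal) := Cardinal.mk_fin n
        _ < ((n + 1 : ℕ) : Cardinal) := by
            exact_mod_cast Nat.cast_lt.mpr (Nat.lt_succ_self n)
    -- T - A acts diagonally via vR
    have hTA : ∀ (c : ellTwo d) (k : ZLat d), (T - A) c k = (vR k : ℂ) * c k := by
      intro c k
      have : (T - A) c = T c - A c := rfl
      rw [this, lp.coeFn_sub, Pi.sub_apply, diagCLM_apply, diagCLM_apply]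
      by_cases h : k ∈ F
      · simp [hvA_def, hvR_def, h]
      · simp [hvA_def, hvR_def, h]
    have hTA_norm : ‖T - A‖ ≤ Real.sqrt (∑' k, vR k ^ 2) := by
      refine ContinuousLinearMap.opNorm_le_bound _ (Real.sqrt_nonneg _) fun c => ?_
      exact diag_norm_le vR hvR0 hvR_sum c ((T - A) c) (hTA c)
    -- identify the tail sum
    have htail : ∑' k, vR k ^ 2 = ∑' j : ℕ, σ (n + j) ^ 2 := by
      have h1 : ∑' k, vR k ^ 2 = ∑' j : ℕ, vR (e j) ^ 2 := (e.tsum_eq _).symm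
      have hg : ∀ j : ℕ, vR (e j) ^ 2 = if j < n then 0 else σ j ^ 2 := by
        intro j
        by_cases hj : j < n
        · simp [hvR_def, (hmemF j).2 hj, hj]
        · have : e j ∉ F := fun h => hj ((hmemF j).1 h)
          simp [hvR_def, hv_def, this, hj, hσe j, inv_pow]
      have hgsum : Summable fun j : ℕ => vR (e j) ^ 2 :=
        ((Equiv.summable_iff (f := fun k => vR k ^ 2) e).2 hvR_sum)
      have h2 := Summable.sum_add_tsum_nat_add (f := fun j => vR (e j) ^ 2) n hgsum
      have h3 : ∑ i ∈ Finset.range n, vR (e i) ^ 2 = 0 :=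
        Finset.sum_eq_zero fun i hi => by
          rw [hg i, if_pos (Finset.mem_range.1 hi)]
      have h4 : ∀ j : ℕ, vR (e (j + n)) ^ 2 = σ (n + j) ^ 2 := by
        intro j
        rw [hg (j + n), if_neg (by omega), Nat.add_comm j n]
      rw [h1, ← h2, h3, zero_add]
      exact tsum_congr h4
    -- conclude via csInf
    have hbdd : BddBelow {c : ℝ | ∃ A' : ellTwo d →L[ℂ] ellOne d,
        Module.rank ℂ (LinearMap.range ((A' : ellTwo d →L[ℂ] ellOne d) :
          ellTwo d →ₗ[ℂ] ellOne d)) < ((n + 1 : ℕ) : Cardinal) ∧ c = ‖T - A'‖} := by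
      refine ⟨0, ?_⟩
      rintro x ⟨A', -, rfl⟩
      exact norm_nonneg _
    have hmem : ‖T - A‖ ∈ {c : ℝ | ∃ A' : ellTwo d →L[ℂ] ellOne d,
        Module.rank ℂ (LinearMap.range ((A' : ellTwo d →L[ℂ] ellOne d) :
          ellTwo d →ₗ[ℂ] ellOne d)) < ((n + 1 : ℕ) : Cardinal) ∧ c = ‖T - A'‖} :=
      ⟨A, hrank, rfl⟩
    calc approxNum T (n + 1) ≤ ‖T - A‖ := csInf_le hbdd hmem
      _ ≤ Real.sqrt (∑' k, vR k ^ 2) := hTA_norm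
      _ = Real.sqrt (∑' j : ℕ, σ (n + j) ^ 2) := by rw [htail]
end
end

section
/- Let H be a Hilbert space, let (Ω,Σ,ν) be a measure space with 0 < ν(Ω) < ∞, and let id_ν : L∞(ν) → L₂(ν) denote the formal identity. Then for every bounded linear operator T : H → L∞(ν) and every n ∈ N one has a_n(T) ≥ ν(Ω)^{-1/2} (∑_{j=n}^∞ a_j(id_ν ∘ T)²)^{1/2}, where a_j(id_ν ∘ T) are the approximation numbers (equivalently, the singular numbers) of the operator id_ν ∘ T : H → L₂(ν). -/
/-! Removing an operator of rank at most `n` from `T` shifts the approximation numbers of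
`id_ν ∘ T` by `n`, so it suffices to show `∑ⱼ aⱼ(id_ν ∘ R)² ≤ ν(Ω) ‖R‖²` for every
`R : H → L∞(ν)`. Choosing orthonormal vectors `e₁, …, e_N` greedily, each almost maximising
`‖id_ν R e‖` on the orthogonal complement of the previous ones, bounds `∑_{j ≤ N} aⱼ(id_ν R)²`
by `∑ᵢ ‖R eᵢ‖²_{L₂}` up to any `ε > 0`. For every coefficient vector `c`, almost everywhere
`|∑ᵢ cᵢ (R eᵢ)(ω)| ≤ ‖R‖ |c|`; hence `∑ᵢ |(R eᵢ)(ω)|² ≤ ‖R‖²` almost everywhere, and integrating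
over `Ω` gives the bound. -/

open MeasureTheory Filter
open scoped ENNReal NNReal

noncomputable section

open scoped InnerProductSpace ComplexConjugate

section ApproximationNumbers

variable {X Y : Type*} [NormedAddCommGroup X] [NormedSpace ℂ X]
  [NormedAddCommGroup Y] [NormedSpace ℂ Y]

lemma approxNum_nonneg (T : X →L[ℂ] Y) (n : ℕ) : 0 ≤ approxNum T n :=
  Real.sInf_nonneg (by rintro _ ⟨A, -, rfl⟩; exact norm_nonneg _)

lemma approxNum_le_norm_sub (T : X →L[ℂ] Y) {n : ℕ} {A : X →L[ℂ] Y}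
    (hA : LinearMap.rank (A : X →ₗ[ℂ] Y) < n) : approxNum T n ≤ ‖T - A‖ :=
  csInf_le ⟨0, by rintro _ ⟨B, -, rfl⟩; exact norm_nonneg _⟩ ⟨A, hA, rfl⟩

lemma le_approxNum {T : X →L[ℂ] Y} {n : ℕ} (hn : 0 < n) {c : ℝ}
    (h : ∀ A : X →L[ℂ] Y, LinearMap.rank (A : X →ₗ[ℂ] Y) < n → c ≤ ‖T - A‖) :
    c ≤ approxNum T n :=
  le_csInf ⟨‖T - 0‖, 0, by simpa using hn, rfl⟩ (by rintro _ ⟨A, hA, rfl⟩; exact h A hA)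

lemma approxNum_le_approxNum_of_le (T : X →L[ℂ] Y) {m n : ℕ} (hm : 0 < m) (hmn : m ≤ n) :
    approxNum T n ≤ approxNum T m :=
  le_approxNum hm fun _ hA => approxNum_le_norm_sub T (hA.trans_le (by exact_mod_cast hmn))

lemma approxNum_add_le_approxNum_sub (S A : X →L[ℂ] Y) {m : ℕ}
    (hA : LinearMap.rank (A : X →ₗ[ℂ] Y) ≤ m) (n : ℕ) :
    approxNum S (m + n + 1) ≤ approxNum (S - A) (n + 1) := by
  refine le_approxNum n.succ_pos fun B hB => ?_
  rw [Nat.cast_succ, Cardinal.lt_natCast_add_one_iff] at hB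
  have hAB : LinearMap.rank ((A + B : X →L[ℂ] Y) : X →ₗ[ℂ] Y) < (m + n + 1 : ℕ) := by
    rw [Nat.cast_succ, Cardinal.lt_natCast_add_one_iff, Nat.cast_add]
    exact (LinearMap.rank_add_le _ _).trans (add_le_add hA hB)
  simpa [sub_sub] using approxNum_le_norm_sub S hAB

end ApproximationNumbers

section Hilbert

variable {H E : Type*} [NormedAddCommGroup H] [InnerProductSpace ℂ H]
  [NormedAddCommGroup E] [NormedSpace ℂ E]

lemma exists_norm_eq_one_mem_orthogonal_lt_norm_apply (S : H →L[ℂ] E) (U : Submodule ℂ H)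
    [FiniteDimensional ℂ U] {r : ℝ} (hr0 : 0 ≤ r)
    (hr : r < approxNum S (Module.finrank ℂ U + 1)) :
    ∃ x ∈ Uᗮ, ‖x‖ = 1 ∧ r < ‖S x‖ := by
  have hrank : LinearMap.rank ((S ∘L U.starProjection : H →L[ℂ] E) : H →ₗ[ℂ] E)
      < (Module.finrank ℂ U + 1 : ℕ) := by
    rw [Nat.cast_succ, Cardinal.lt_natCast_add_one_iff]
    change Module.rank ℂ (LinearMap.range
      ((S : H →ₗ[ℂ] E) ∘ₗ (U.starProjection : H →ₗ[ℂ] H))) ≤ _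
    have hU : LinearMap.range (U.starProjection : H →ₗ[ℂ] H) = U := U.range_starProjection
    rw [LinearMap.range_comp, hU, ← Module.finrank_eq_rank]
    exact_mod_cast U.finrank_map_le (S : H →ₗ[ℂ] E)
  have hQ : S - S ∘L U.starProjection = S ∘L Uᗮ.starProjection := by
    rw [Submodule.starProjection_orthogonal, ContinuousLinearMap.comp_sub,
      ContinuousLinearMap.comp_id]
  obtain ⟨x, hx1, hrx⟩ := (S ∘L Uᗮ.starProjection).exists_lt_apply_of_lt_opNorm
    (hr.trans_le (hQ ▸ approxNum_le_norm_sub S hrank))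
  set y := Uᗮ.starProjection x
  have hy1 : ‖y‖ < 1 := (Uᗮ.norm_starProjection_apply_le x).trans_lt hx1
  have hy0 : 0 < ‖y‖ := norm_pos_iff.2 fun h => by simp [y, h] at hrx; linarith
  refine ⟨(‖y‖⁻¹ : ℂ) • y, Submodule.smul_mem _ _ (Uᗮ.starProjection_apply_mem x), ?_, ?_⟩
  · simp [norm_smul, hy0.ne']
  calc r < ‖S y‖ := hrx
    _ ≤ ‖y‖⁻¹ * ‖S y‖ := le_mul_of_one_le_left (norm_nonneg _) ((one_le_inv₀ hy0).2 hy1.le)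
    _ = ‖S ((‖y‖⁻¹ : ℂ) • y)‖ := by simp [norm_smul]

lemma exists_orthonormal_sum_sq_approxNum_le (S : H →L[ℂ] E) {δ : ℝ} (hδ : 0 < δ) (N : ℕ) :
    ∃ (k : ℕ) (e : Fin k → H), k ≤ N ∧ Orthonormal ℂ e ∧
      ∑ j ∈ Finset.range N, approxNum S (j + 1) ^ 2 ≤ ∑ i, ‖S (e i)‖ ^ 2 + N * δ := by
  induction N with
  | zero => exact ⟨0, Fin.elim0, le_rfl, .of_isEmpty _, by simp⟩
  | succ N ih =>
    obtain ⟨k, e, hkN, he, hsum⟩ := ih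
    have hanti : approxNum S (N + 1) ^ 2 ≤ approxNum S (k + 1) ^ 2 :=
      pow_le_pow_left₀ (approxNum_nonneg S _)
        (approxNum_le_approxNum_of_le S k.succ_pos (by omega)) 2
    rcases (approxNum_nonneg S (k + 1)).eq_or_lt with hzero | hpos
    · refine ⟨k, e, hkN.trans N.le_succ, he, ?_⟩
      have hN : approxNum S (N + 1) ^ 2 ≤ 0 := by simpa [← hzero] using hanti
      rw [Finset.sum_range_succ]
      push_cast
      linarith
    · set a := approxNum S (k + 1)
      have := FiniteDimensional.span_of_finite ℂ (Set.finite_range e)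
      have hfin : Module.finrank ℂ (Submodule.span ℂ (Set.range e)) = k := by
        rw [finrank_span_eq_card he.linearIndependent, Fintype.card_fin]
      -- `r = √(a² - δ)` turns `r < ‖S x‖` into `a² < ‖S x‖² + δ`.
      obtain ⟨x, hxe, hx1, hSx⟩ := exists_norm_eq_one_mem_orthogonal_lt_norm_apply S
        (Submodule.span ℂ (Set.range e)) (Real.sqrt_nonneg (a ^ 2 - δ))
        (by rw [hfin, Real.sqrt_lt' hpos]; linarith)
      have hxe' : ∀ i, ⟪x, e i⟫_ℂ = 0 := fun i =>
        (Submodule.mem_orthogonal' _ _).1 hxe _ (Submodule.subset_span ⟨i, rfl⟩)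
      have hgain : a ^ 2 < ‖S x‖ ^ 2 + δ := by
        rw [Real.sqrt_lt' ((Real.sqrt_nonneg _).trans_lt hSx)] at hSx
        linarith
      refine ⟨k + 1, Matrix.vecCons x e, by omega, orthonormal_vecCons_iff.2 ⟨hx1, hxe', he⟩, ?_⟩
      rw [Finset.sum_range_succ, Fin.sum_univ_succ]
      simp only [Matrix.cons_val_zero, Matrix.cons_val_succ]
      push_cast
      linarith

end Hilbert

lemma norm_le_of_dense_norm_inner_le {𝕜 F : Type*} [RCLike 𝕜] [NormedAddCommGroup F]
    [InnerProductSpace 𝕜 F] {D : Set F} (hD : Dense D) {z : F} {C : ℝ} (hC : 0 ≤ C)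
    (h : ∀ c ∈ D, ‖⟪c, z⟫_𝕜‖ ≤ C * ‖c‖) : ‖z‖ ≤ C := by
  have hz : ‖⟪z, z⟫_𝕜‖ ≤ C * ‖z‖ :=
    hD.induction (P := fun c => ‖⟪c, z⟫_𝕜‖ ≤ C * ‖c‖) h
      (isClosed_le (by fun_prop) (by fun_prop)) z
  rw [inner_self_eq_norm_sq_to_K, norm_pow, RCLike.norm_ofReal, abs_norm] at hz
  nlinarith [norm_nonneg z]

namespace MeasureTheory

variable {Ω : Type*} [MeasurableSpace Ω] {ν : Measure Ω}

lemma Lp.ae_norm_le_norm_top {E : Type*} [NormedAddCommGroup E] (f : Lp E ∞ ν) :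
    ∀ᵐ ω ∂ν, ‖f ω‖ ≤ ‖f‖ := by
  rw [Lp.norm_def, toReal_eLpNorm (Lp.aestronglyMeasurable f)]
  exact ae_le_lpNorm_exponent_top (Lp.memLp f)

lemma L2.norm_sq_eq_integral_norm_sq (f : Lp ℂ 2 ν) : ‖f‖ ^ 2 = ∫ ω, ‖f ω‖ ^ 2 ∂ν := by
  rw [@norm_sq_eq_re_inner ℂ, L2.inner_def, ← integral_re (L2.integrable_inner f f)]
  simp only [inner_self_eq_norm_sq]

lemma L2.sum_norm_sq_le_of_ae_sum_le [IsFiniteMeasure ν] {k : ℕ} (f : Fin k → Lp ℂ 2 ν) {C : ℝ}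
    (hC : ∀ᵐ ω ∂ν, ∑ i, ‖f i ω‖ ^ 2 ≤ C) : ∑ i, ‖f i‖ ^ 2 ≤ C * (ν Set.univ).toReal := by
  have hint : ∀ i, Integrable (fun ω => ‖f i ω‖ ^ 2) ν := fun i =>
    (Lp.memLp (f i)).integrable_norm_pow two_ne_zero
  simp_rw [L2.norm_sq_eq_integral_norm_sq]
  rw [← integral_finsetSum _ fun i _ => hint i]
  calc ∫ ω, ∑ i, ‖f i ω‖ ^ 2 ∂ν ≤ ∫ _, C ∂ν :=
        integral_mono_ae (integrable_finsetSum _ fun i _ => hint i) (integrable_const C) hC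
    _ = C * (ν Set.univ).toReal := by rw [integral_const, smul_eq_mul, mul_comm]; rfl

lemma ae_sum_norm_sq_apply_le_of_orthonormal {H : Type*} [NormedAddCommGroup H]
    [InnerProductSpace ℂ H]
    (R : H →L[ℂ] Lp ℂ ∞ ν) {k : ℕ} {e : Fin k → H} (he : Orthonormal ℂ e) :
    ∀ᵐ ω ∂ν, ∑ i, ‖R (e i) ω‖ ^ 2 ≤ ‖R‖ ^ 2 := by
  let z : Ω → EuclideanSpace ℂ (Fin k) := fun ω => WithLp.toLp 2 fun i => R (e i) ω
  have hz : ∀ c : EuclideanSpace ℂ (Fin k), ∀ᵐ ω ∂ν, ‖⟪c, z ω⟫_ℂ‖ ≤ ‖R‖ * ‖c‖ := by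
    intro c
    set v := ∑ i, conj (c i) • e i
    have hv : ‖v‖ = ‖c‖ := by
      refine (sq_eq_sq₀ (norm_nonneg _) (norm_nonneg _)).1 ?_
      rw [@norm_sq_eq_re_inner ℂ, he.inner_sum, EuclideanSpace.norm_sq_eq]
      simp [Complex.sq_norm, Complex.normSq_apply]
    filter_upwards [Lp.coeFn_fun_finsetSum Finset.univ fun i => conj (c i) • R (e i),
      ae_all_iff.2 fun i => Lp.coeFn_smul (conj (c i)) (R (e i)),
      Lp.ae_norm_le_norm_top (R v)] with ω hsum hsmul hle
    have hRv : R v ω = ⟪c, z ω⟫_ℂ := by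
      simp only [v, map_sum, map_smul]
      rw [hsum, PiLp.inner_apply]
      simp [hsmul, z, mul_comm]
    calc ‖⟪c, z ω⟫_ℂ‖ = ‖R v ω‖ := by rw [hRv]
      _ ≤ ‖R v‖ := hle
      _ ≤ ‖R‖ * ‖c‖ := hv ▸ R.le_opNorm v
  -- Each `c` has its own null set; a countable dense set of `c` suffices by continuity.
  obtain ⟨D, hDc, hD⟩ := TopologicalSpace.exists_countable_dense (EuclideanSpace ℂ (Fin k))
  filter_upwards [(ae_ball_iff hDc).2 fun c _ => hz c] with ω hω
  calc ∑ i, ‖R (e i) ω‖ ^ 2 = ‖z ω‖ ^ 2 := (EuclideanSpace.norm_sq_eq (z ω)).symm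
    _ ≤ ‖R‖ ^ 2 :=
      pow_le_pow_left₀ (norm_nonneg _) (norm_le_of_dense_norm_inner_le hD (norm_nonneg R) hω) 2

end MeasureTheory

open MeasureTheory in
lemma sum_range_sq_approxNum_comp_le {H Ω : Type*} [NormedAddCommGroup H]
    [InnerProductSpace ℂ H] [MeasurableSpace Ω] {ν : Measure Ω} [IsFiniteMeasure ν]
    (ι : Lp ℂ ∞ ν →L[ℂ] Lp ℂ 2 ν) (hι : ∀ f : Lp ℂ ∞ ν, ⇑(ι f) =ᵐ[ν] ⇑f)
    (R : H →L[ℂ] Lp ℂ ∞ ν) (N : ℕ) :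
    ∑ j ∈ Finset.range N, approxNum (ι ∘L R) (j + 1) ^ 2 ≤ ‖R‖ ^ 2 * (ν Set.univ).toReal := by
  refine le_of_forall_pos_le_add fun ε hε => ?_
  obtain ⟨k, e, -, he, hsum⟩ :=
    exists_orthonormal_sum_sq_approxNum_le (ι ∘L R) (div_pos hε (N.cast_add_one_pos)) N
  have hR : ∑ i, ‖ι (R (e i))‖ ^ 2 ≤ ‖R‖ ^ 2 * (ν Set.univ).toReal := by
    refine L2.sum_norm_sq_le_of_ae_sum_le _ ?_
    filter_upwards [ae_all_iff.2 fun i => hι (R (e i)),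
      ae_sum_norm_sq_apply_le_of_orthonormal R he] with ω hιω hRω
    simpa only [hιω] using hRω
  have hslack : N * (ε / (N + 1)) ≤ ε := by
    rw [mul_div_assoc']
    exact div_le_of_le_mul₀ (by positivity) hε.le (by nlinarith)
  simp only [ContinuousLinearMap.comp_apply] at hsum
  linarith

theorem statement2_general {H : Type*} [NormedAddCommGroup H] [InnerProductSpace ℂ H]
    {Ω : Type*} [MeasurableSpace Ω] (ν : Measure Ω)
    (hνfin : ν Set.univ < ⊤)
    (ι : Lp ℂ ⊤ ν →L[ℂ] Lp ℂ 2 ν) (hι : ∀ f : Lp ℂ ⊤ ν, ⇑(ι f) =ᵐ[ν] ⇑f)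
    (T : H →L[ℂ] Lp ℂ ⊤ ν) (n : ℕ) :
    Real.sqrt ((ν Set.univ).toReal)⁻¹ *
        Real.sqrt (∑' j : ℕ, approxNum (ι.comp T) (n + 1 + j) ^ 2) ≤
      approxNum T (n + 1) := by
  have : IsFiniteMeasure ν := ⟨hνfin⟩
  refine le_approxNum n.succ_pos fun A hA => ?_
  have hιA : LinearMap.rank ((ι ∘L A : H →L[ℂ] Lp ℂ 2 ν) : H →ₗ[ℂ] Lp ℂ 2 ν) ≤ n := by
    rw [Nat.cast_succ, Cardinal.lt_natCast_add_one_iff] at hA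
    exact (LinearMap.rank_comp_le_right (A : H →ₗ[ℂ] Lp ℂ ∞ ν)
      (ι : Lp ℂ ∞ ν →ₗ[ℂ] Lp ℂ 2 ν)).trans hA
  have htail :
      ∑' j, approxNum (ι ∘L T) (n + 1 + j) ^ 2 ≤ ‖T - A‖ ^ 2 * (ν Set.univ).toReal := by
    refine Real.tsum_le_of_sum_range_le (fun _ => sq_nonneg _) fun N => ?_
    refine (Finset.sum_le_sum fun j _ => ?_).trans
      (sum_range_sq_approxNum_comp_le ι hι (T - A) N)
    refine pow_le_pow_left₀ (approxNum_nonneg _ _) ?_ 2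
    simpa [add_right_comm n 1 j, ContinuousLinearMap.comp_sub] using
      approxNum_add_le_approxNum_sub (ι ∘L T) (ι ∘L A) hιA j
  rw [← Real.sqrt_mul (inv_nonneg.2 ENNReal.toReal_nonneg), ← Real.sqrt_sq (norm_nonneg (T - A)),
    inv_mul_eq_div]
  exact Real.sqrt_le_sqrt (div_le_of_le_mul₀ ENNReal.toReal_nonneg (sq_nonneg _) htail)

/-- Lemma 3 of Cobos–Kühn–Sickel. Let `H` be a Hilbert space,
`(Ω,Σ,ν)` a measure space with `0 < ν(Ω) < ∞`, and `ι : L_∞(ν) → L₂(ν)` the formal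
identity. Then for every bounded operator `T : H → L_∞(ν)` and every `n ≥ 1`,
`a_n(T) ≥ ν(Ω)^{-1/2} (∑_{j=n}^∞ a_j(ι ∘ T)²)^{1/2}`. -/
theorem statement2 {H : Type*} [NormedAddCommGroup H] [InnerProductSpace ℂ H]
    [CompleteSpace H] {Ω : Type*} [MeasurableSpace Ω] (ν : Measure Ω)
    (hν0 : 0 < ν Set.univ) (hνfin : ν Set.univ < ⊤)
    (ι : Lp ℂ ⊤ ν →L[ℂ] Lp ℂ 2 ν) (hι : ∀ f : Lp ℂ ⊤ ν, ⇑(ι f) =ᵐ[ν] ⇑f)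
    (T : H →L[ℂ] Lp ℂ ⊤ ν) (n : ℕ) :
    Real.sqrt ((ν Set.univ).toReal)⁻¹ *
        Real.sqrt (∑' j : ℕ, approxNum (ι.comp T) (n + 1 + j) ^ 2) ≤
      approxNum T (n + 1) :=
  statement2_general ν hνfin ι hι T n
end
end
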